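/- For $\Re(s) > 1$, one has the identity $\sum_{n=1}^\infty \frac{(-1)^{A(n)}}{n^s} = \frac{2^s + 1}{2^s - 1} \cdot \frac{\zeta(2s)}{\zeta(s)}$. -/

import Mathlib

open Complex Finset Filter Asymptotics intervalIntegral
open scoped Real Topology Classical

noncomputable section

/-- The additive prime divisor function `A(n) = ∑_{p^α ∥ n} α p`. -/
def Apd (n : ℕ) : ℕ := n.factorization.sum fun p a => a * p

/-- The completely multiplicative function `ψ_{h/q}(n) = e^{2πi h A(n)/q}`. -/
def psiA (h : ℤ) (q : ℕ) (n : ℕ) : ℂ :=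
  Complex.exp (2 * (Real.pi : ℂ) * Complex.I * (h : ℂ) * (Apd n : ℂ) / (q : ℂ))

/-- The summatory function `∑_{n ≤ x} ψ_{h/q}(n)`. -/
def Spsi (h : ℤ) (q : ℕ) (x : ℝ) : ℂ := ∑ n ∈ Finset.Icc 1 ⌊x⌋₊, psiA h q n

/-- The Dirichlet series `L(s, ψ_{h/q})`. -/
def Lpsi (h : ℤ) (q : ℕ) (s : ℂ) : ℂ := ∑' n : ℕ, psiA h q n / (n : ℂ) ^ s

/-- the ratio μ(q)/φ(q) -/
def mphi (q : ℕ) : ℝ := (ArithmeticFunction.moebius q : ℝ) / (Nat.totient q : ℝ)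

/-- Gauss sum τ(χ) = ∑_{ℓ mod q} χ(ℓ) e^{2πiℓ/q}. -/
def gaussS {q : ℕ} (χ : DirichletCharacter ℂ q) : ℂ :=
  ∑ l ∈ Finset.range q, χ (l : ZMod q) * Complex.exp (2 * (Real.pi : ℂ) * Complex.I * (l : ℂ) / (q : ℂ))

/-- conjugate Dirichlet character -/
def conjChar {q : ℕ} (χ : DirichletCharacter ℂ q) : DirichletCharacter ℂ q :=
  χ.ringHomComp (starRingEnd ℂ)

/-- `T_{h,q}(s) = ∑_p ∑_{k ≥ 2} (e^{2πiphk/q} - e^{2πip^k h/q})/(k p^{sk})`. -/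
def Thq (h : ℤ) (q : ℕ) (s : ℂ) : ℂ :=
  ∑' (p : Nat.Primes) (k : ℕ),
    (Complex.exp (2 * (Real.pi : ℂ) * Complex.I * ((p : ℕ) : ℂ) * (h : ℂ) * ((k : ℂ) + 2) / (q : ℂ))
      - Complex.exp (2 * (Real.pi : ℂ) * Complex.I * (((p : ℕ) : ℂ) ^ (k + 2)) * (h : ℂ) / (q : ℂ)))
      / (((k : ℂ) + 2) * ((p : ℕ) : ℂ) ^ (s * ((k : ℂ) + 2)))

/-- `U_{h,q}(s)`. -/
def Uhq (h : ℤ) (q : ℕ) (s : ℂ) : ℂ :=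
  -((mphi q : ℝ) : ℂ) * ∑ p ∈ q.primeFactors, ∑' k : ℕ,
      1 / (((k : ℂ) + 1) * (p : ℂ) ^ (s * ((k : ℂ) + 1)))
  + ∑ p ∈ q.primeFactors, ∑' k : ℕ,
      Complex.exp (2 * (Real.pi : ℂ) * Complex.I * (h : ℂ) * ((p : ℂ) ^ (k + 1)) / (q : ℂ))
        / (((k : ℂ) + 1) * (p : ℂ) ^ (s * ((k : ℂ) + 1)))
  + Thq h q s

/-- log of a Dirichlet L-function as absolutely convergent prime-power sum, for Re(s) > 1. -/
def plogChar {q : ℕ} (χ : DirichletCharacter ℂ q) (s : ℂ) : ℂ :=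
  ∑' (p : Nat.Primes) (k : ℕ),
    χ (((p : ℕ) : ZMod q)) ^ (k + 1) / (((k : ℂ) + 1) * ((p : ℕ) : ℂ) ^ (s * ((k : ℂ) + 1)))

/-- log of the Riemann zeta function as prime-power sum, for Re(s) > 1. -/
def plogZeta (s : ℂ) : ℂ :=
  ∑' (p : Nat.Primes) (k : ℕ),
    1 / (((k : ℂ) + 1) * ((p : ℕ) : ℂ) ^ (s * ((k : ℂ) + 1)))

/-- log L(s, ψ_{h/q}) = ∑_p ∑_{k≥1} e^{2πiphk/q}/(k p^{sk}). -/
def plogPsi (h : ℤ) (q : ℕ) (s : ℂ) : ℂ :=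
  ∑' (p : Nat.Primes) (k : ℕ),
    Complex.exp (2 * (Real.pi : ℂ) * Complex.I * ((p : ℕ) : ℂ) * (h : ℂ) * ((k : ℂ) + 1) / (q : ℂ))
      / (((k : ℂ) + 1) * ((p : ℕ) : ℂ) ^ (s * ((k : ℂ) + 1)))

/-- the sum ∑_p ∑_{k≥1} e^{2πi h p^k/q}/(k p^{sk}). -/
def plogPsiAlt (h : ℤ) (q : ℕ) (s : ℂ) : ℂ :=
  ∑' (p : Nat.Primes) (k : ℕ),
    Complex.exp (2 * (Real.pi : ℂ) * Complex.I * (h : ℂ) * (((p : ℕ) : ℂ) ^ (k + 1)) / (q : ℂ))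
      / (((k : ℂ) + 1) * ((p : ℕ) : ℂ) ^ (s * ((k : ℂ) + 1)))

end

/-!
Both sides are Euler products. `n ↦ (-1)^{A(n)} n^{-s}` is completely multiplicative with value
`(-1)^p p^{-s}` at a prime `p`, so its local factor at an odd prime is `(1 + p^{-s})⁻¹`, which
multiplied by the local factor `(1 - p^{-s})⁻¹` of `ζ(s)` gives the local factor of `ζ(2s)`.
At `p = 2` the product is `(1 - 2^{-s})⁻²`, i.e. the local factor of `ζ(2s)` times
`(2^s + 1) / (2^s - 1)`.
-/

lemma apd_mul {m n : ℕ} (hm : m ≠ 0) (hn : n ≠ 0) : Apd (m * n) = Apd m + Apd n := by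
  unfold Apd
  rw [Nat.factorization_mul hm hn,
    Finsupp.sum_add_index' (fun p => zero_mul p) (fun p a b => add_mul a b p)]

lemma apd_prime {p : ℕ} (hp : p.Prime) : Apd p = p := by
  unfold Apd
  rw [hp.factorization, Finsupp.sum_single_index (zero_mul p), one_mul]

lemma inv_one_add_mul_inv_one_sub {K : Type*} [Field K] (x : K) :
    (1 + x)⁻¹ * (1 - x)⁻¹ = (1 - x ^ 2)⁻¹ := by
  rw [← mul_inv]
  ring

lemma inv_one_sub_inv_mul_self {K : Type*} [Field K] {y : K} (h0 : y ≠ 0) (h1 : y + 1 ≠ 0) :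
    (1 - y⁻¹)⁻¹ * (1 - y⁻¹)⁻¹ = (1 - y⁻¹ ^ 2)⁻¹ * ((y + 1) / (y - 1)) := by
  rcases eq_or_ne y 1 with rfl | hy1
  · simp
  have hsq : y ^ 2 - 1 ≠ 0 := by
    rw [show y ^ 2 - 1 = (y + 1) * (y - 1) by ring]
    exact mul_ne_zero h1 (sub_ne_zero.mpr hy1)
  field_simp
  ring

section EulerProduct

variable {s : ℂ}

noncomputable def negOnePowApdSummandHom (hs : s ≠ 0) : ℕ →*₀ ℂ where
  toFun n := (-1) ^ Apd n * (n : ℂ) ^ (-s)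
  map_zero' := by simp [hs]
  map_one' := by simp [Apd]
  map_mul' m n := by
    rcases eq_or_ne m 0 with rfl | hm
    · simp [hs]
    rcases eq_or_ne n 0 with rfl | hn
    · simp [hs]
    simp only [apd_mul hm hn, pow_add, Nat.cast_mul, natCast_mul_natCast_cpow]
    ring

lemma summable_negOnePowApdSummand (hs : 1 < s.re) :
    Summable (fun n ↦ ‖negOnePowApdSummandHom (ne_zero_of_one_lt_re hs) n‖) := by
  simpa [negOnePowApdSummandHom, riemannZetaSummandHom] using summable_riemannZetaSummand hs

theorem negOnePowApd_eulerProduct_hasProd (hs : 1 < s.re) :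
    HasProd (fun p : Nat.Primes ↦ (1 - (-1) ^ (p : ℕ) * (p : ℂ) ^ (-s))⁻¹)
      (∑' n : ℕ, (-1 : ℂ) ^ Apd n / (n : ℂ) ^ s) := by
  have h := EulerProduct.eulerProduct_completely_multiplicative_hasProd
    (summable_negOnePowApdSummand hs)
  simp only [negOnePowApdSummandHom, MonoidWithZeroHom.coe_mk, ZeroHom.coe_mk] at h
  convert h using 1
  · funext p
    rw [apd_prime p.2]
  · simp only [cpow_neg, div_eq_mul_inv]

lemma cpow_neg_two_mul (x s : ℂ) : x ^ (-(2 * s)) = (x ^ (-s)) ^ 2 := by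
  rw [← cpow_mul_nat]
  push_cast
  ring_nf

lemma one_lt_norm_two_cpow (hs : 0 < s.re) : 1 < ‖(2 : ℂ) ^ s‖ := by
  rw [show (2 : ℂ) = ((2 : ℝ) : ℂ) by norm_num, norm_cpow_eq_rpow_re_of_pos two_pos]
  exact Real.one_lt_rpow one_lt_two hs

lemma negOnePowApd_eulerFactor_mul_zeta_eulerFactor (hs : 0 < s.re) {q : Nat.Primes}
    (hq : (q : ℕ) = 2) (p : Nat.Primes) :
    (1 - (-1) ^ (p : ℕ) * (p : ℂ) ^ (-s))⁻¹ * (1 - (p : ℂ) ^ (-s))⁻¹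
      = (1 - (p : ℂ) ^ (-(2 * s)))⁻¹
        * (Pi.mulSingle q ((2 ^ s + 1) / (2 ^ s - 1)) : Nat.Primes → ℂ) p := by
  rw [cpow_neg_two_mul]
  rcases eq_or_ne p q with rfl | hpq
  · have h0 : (2 : ℂ) ^ s ≠ 0 := by simp
    have h1 : (2 : ℂ) ^ s + 1 ≠ 0 := by
      rw [← sub_neg_eq_add, sub_ne_zero]
      intro h
      simpa [h] using one_lt_norm_two_cpow hs
    rw [Pi.mulSingle_eq_same, hq, Nat.cast_ofNat]
    simpa [cpow_neg] using inv_one_sub_inv_mul_self h0 h1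
  · have hp : Odd (p : ℕ) := p.2.odd_of_ne_two fun h ↦ hpq (Subtype.ext (h.trans hq.symm))
    rw [hp.neg_one_pow, Pi.mulSingle_eq_of_ne hpq, mul_one, neg_one_mul, sub_neg_eq_add]
    exact inv_one_add_mul_inv_one_sub _

end EulerProduct

theorem stmt15 (s : ℂ) (hs : 1 < s.re) :
    ∑' n : ℕ, ((-1 : ℂ) ^ Apd n) / (n : ℂ) ^ s
      = (2 ^ s + 1) / (2 ^ s - 1) * (riemannZeta (2 * s) / riemannZeta s) := by
  have h2s : 1 < (2 * s).re := by simpa using (by linarith : 1 < 2 * s.re)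
  have hprod := (negOnePowApd_eulerProduct_hasProd hs).mul (riemannZeta_eulerProduct_hasProd hs)
  simp only [negOnePowApd_eulerFactor_mul_zeta_eulerFactor (by linarith : 0 < s.re)
    (q := ⟨2, Nat.prime_two⟩) rfl] at hprod
  have key := hprod.unique <|
    (riemannZeta_eulerProduct_hasProd h2s).mul (hasProd_pi_single _ _)
  rw [mul_div_assoc', eq_div_iff (riemannZeta_ne_zero_of_one_lt_re hs), key]
  ring
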